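/- arXiv:2401.10927 — 3 statements merged into one kernel-verified Lean document; each statement's English description precedes it below -/
import Mathlib

section
/- Assume n ≥ 2 and |V₁ − V₂| ≤ ξ·n·p·γ/3 for some ξ > 0. Then for every Ẑ ∈ M_opt, |⟨B̄ − R, Ẑ − Z*⟩| ≤ 2·pγ·‖Ẑ − Z*‖₁·(ξ + 1/(4(n−1))). -/
open Matrix Finset

noncomputable section

def opNorm {k l : ℕ} (A : Matrix (Fin k) (Fin l) ℝ) : ℝ :=
  ‖(Matrix.toEuclideanLin A).toContinuousLinearMap‖

def ip {n : ℕ} (A B : Matrix (Fin n) (Fin n) ℝ) : ℝ := Matrix.trace (Aᵀ * B)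

def ell1Norm {k l : ℕ} (M : Matrix (Fin k) (Fin l) ℝ) : ℝ := ∑ i, ∑ j, |M i j|

def frobNorm {k l : ℕ} (M : Matrix (Fin k) (Fin l) ℝ) : ℝ :=
  Real.sqrt (∑ i, ∑ j, (M i j) ^ 2)

def euclNorm {k : ℕ} (x : Fin k → ℝ) : ℝ := Real.sqrt (∑ i, x i ^ 2)

def En (n : ℕ) : Matrix (Fin n) (Fin n) ℝ := Matrix.of fun _ _ => 1

def centering (n : ℕ) : Matrix (Fin n) (Fin n) ℝ := 1 - ((n : ℝ)⁻¹) • En n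

def Mopt (n : ℕ) : Set (Matrix (Fin n) (Fin n) ℝ) :=
  {Z | Z.PosSemidef ∧ ∀ i, Z i i = 1}

def MGplus (n : ℕ) : Set (Matrix (Fin n) (Fin n) ℝ) :=
  {Z | Z.PosSemidef ∧ ∀ i, Z i i ≤ 1}

def MoptPlus (n : ℕ) : Set (Matrix (Fin n) (Fin n) ℝ) :=
  {Z | Z.PosSemidef ∧ (∀ i, Z i i = 1) ∧ ip (En n) Z = 0}

def u2 (n n₁ : ℕ) : Fin n → ℝ := fun j => if (j : ℕ) < n₁ then 1 else -1

def Zstar (n n₁ : ℕ) : Matrix (Fin n) (Fin n) ℝ :=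
  Matrix.vecMulVec (u2 n n₁) (u2 n n₁)

def wmin (n n₁ n₂ : ℕ) : ℝ := min ((n₁ : ℝ) / n) ((n₂ : ℝ) / n)

def vref (n n₁ n₂ : ℕ) : Fin n → ℝ :=
  fun j => if (j : ℕ) < n₁ then (n₂ : ℝ) / n else -((n₁ : ℝ) / n)

def Rmat (n n₁ n₂ p : ℕ) (γ : ℝ) : Matrix (Fin n) (Fin n) ℝ :=
  ((p : ℝ) * γ) • Matrix.vecMulVec (vref n n₁ n₂) (vref n n₁ n₂)

def Dmat (n n₁ : ℕ) (V₁ V₂ : ℝ) : Matrix (Fin n) (Fin n) ℝ :=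
  Matrix.diagonal fun j => if (j : ℕ) < n₁ then V₁ else V₂

def Gbar (n n₁ n₂ p : ℕ) (γ V₁ V₂ : ℝ) : Matrix (Fin n) (Fin n) ℝ :=
  centering n * Dmat n n₁ V₁ V₂ * centering n + Rmat n n₁ n₂ p γ

def taubar (n n₁ n₂ p : ℕ) (γ V₁ V₂ : ℝ) : ℝ :=
  Matrix.trace (Gbar n n₁ n₂ p γ V₁ V₂) / n

def lambar (n n₁ n₂ p : ℕ) (γ V₁ V₂ : ℝ) : ℝ :=
  ((∑ i, ∑ j, Gbar n n₁ n₂ p γ V₁ V₂ i j) - Matrix.trace (Gbar n n₁ n₂ p γ V₁ V₂)) /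
    ((n : ℝ) * ((n : ℝ) - 1))

def Bbar (n n₁ n₂ p : ℕ) (γ V₁ V₂ : ℝ) : Matrix (Fin n) (Fin n) ℝ :=
  Gbar n n₁ n₂ p γ V₁ V₂ - lambar n n₁ n₂ p γ V₁ V₂ • (En n - 1) -
    taubar n n₁ n₂ p γ V₁ V₂ • (1 : Matrix (Fin n) (Fin n) ℝ)

def W0 (n n₁ n₂ : ℕ) (V₁ V₂ : ℝ) : Matrix (Fin n) (Fin n) ℝ :=
  Matrix.diagonal fun j => if (j : ℕ) < n₁ then (V₁ - V₂) * ((n₂ : ℝ) / n)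
    else -((V₁ - V₂) * ((n₁ : ℝ) / n))

def blockDiagE (n n₁ : ℕ) : Matrix (Fin n) (Fin n) ℝ :=
  Matrix.of fun i j =>
    if (i : ℕ) < n₁ ∧ (j : ℕ) < n₁ then 1
    else if n₁ ≤ (i : ℕ) ∧ n₁ ≤ (j : ℕ) then -1 else 0

def W2m (n n₁ : ℕ) (V₁ V₂ : ℝ) : Matrix (Fin n) (Fin n) ℝ :=
  ((V₁ - V₂) / n) • blockDiagE n n₁

def Wbb (n n₁ n₂ : ℕ) (V₁ V₂ : ℝ) : Matrix (Fin n) (Fin n) ℝ :=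
  W2m n n₁ V₁ V₂ + ((V₁ - V₂) * ((n₂ : ℝ) / n - (n₁ : ℝ) / n) / n) • En n


/- ==== auxiliary lemmas ==== -/

theorem sum_fin_ite (n n₁ n₂ : ℕ) (hn : n = n₁ + n₂) (a b : ℝ) :
    ∑ k : Fin n, (if (k:ℕ) < n₁ then a else b) = n₁ * a + n₂ * b := by
  rw [Fin.sum_univ_eq_sum_range (fun k => if k < n₁ then a else b)]
  subst hn
  rw [Finset.sum_range_add,
    Finset.sum_congr rfl (fun x hx => if_pos (Finset.mem_range.1 hx)),
    Finset.sum_congr rfl (fun x (hx : x ∈ range n₂) => if_neg (by omega))]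
  simp [mul_comm]

theorem cdc_apply (n : ℕ) (d : Fin n → ℝ) (i j : Fin n) :
    (centering n * Matrix.diagonal d * centering n) i j =
      (if i = j then d i else 0) - d i / n - d j / n + (∑ k, d k) / (n:ℝ)^2 := by
  have hA : ∀ a b : Fin n, centering n a b = (if a = b then (1:ℝ) else 0) - (n:ℝ)⁻¹ := by
    intro a b
    simp [centering, En, Matrix.one_apply, Matrix.sub_apply, Matrix.smul_apply]
  rw [Matrix.mul_apply]
  have hsummand : ∀ l : Fin n,
      (centering n * Matrix.diagonal d) i l * centering n l j =
      (if i = l then (if j = l then d l else 0) else 0)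
        - (n:ℝ)⁻¹ * (if i = l then d l else 0)
        - (n:ℝ)⁻¹ * (if j = l then d l else 0)
        + (n:ℝ)⁻¹ * (n:ℝ)⁻¹ * d l := by
    intro l
    rw [Matrix.mul_diagonal, hA, hA]
    rcases eq_or_ne l i with h1 | h1
    · subst h1
      rcases eq_or_ne l j with h2 | h2
      · subst h2; simp; ring
      · simp [h2, Ne.symm h2]; ring
    · rcases eq_or_ne l j with h2 | h2
      · subst h2; simp [h1, Ne.symm h1]; ring
      · simp [h1, h2, Ne.symm h1, Ne.symm h2]; ring
  rw [Finset.sum_congr rfl (fun l _ => hsummand l)]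
  simp only [Finset.sum_add_distrib, Finset.sum_sub_distrib, ← Finset.mul_sum,
    Finset.sum_ite_eq, Finset.mem_univ, if_true]
  have hij : (if j = i then (d i : ℝ) else 0) = (if i = j then d i else 0) := by
    by_cases h : i = j
    · subst h; rfl
    · simp [h, Ne.symm h]
  rw [hij]
  field_simp

theorem ip_eq_sum' {n : ℕ} (A B : Matrix (Fin n) (Fin n) ℝ) :
    ip A B = ∑ i, ∑ j, A i j * B i j := by
  simp only [ip, Matrix.trace, Matrix.diag_apply, Matrix.mul_apply, Matrix.transpose_apply]
  exact Finset.sum_comm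

def dfun (n n₁ : ℕ) (V₁ V₂ : ℝ) : Fin n → ℝ := fun j => if (j:ℕ) < n₁ then V₁ else V₂

set_option maxHeartbeats 1600000 in
/-- uniform bound on the bias term over `M_opt`:
`|⟨B̄ - R, Ẑ - Z*⟩| ≤ 2pγ·‖Ẑ - Z*‖₁·(ξ + 1/(4(n-1)))`. -/
theorem bias_term_bound (n n₁ n₂ p : ℕ) (γ V₁ V₂ ξ : ℝ)
    (hn : n = n₁ + n₂) (hn₁ : 0 < n₁) (hn₂ : 0 < n₂) (hp : 1 ≤ p) (hγ : 0 < γ)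
    (hn2 : 2 ≤ n) (hξ : 0 < ξ)
    (hA2 : |V₁ - V₂| ≤ ξ * n * p * γ / 3) :
    ∀ Zhat ∈ Mopt n,
      |ip (Bbar n n₁ n₂ p γ V₁ V₂ - Rmat n n₁ n₂ p γ) (Zhat - Zstar n n₁)| ≤
        2 * ((p : ℝ) * γ) * ell1Norm (Zhat - Zstar n n₁) *
          (ξ + 1 / (4 * ((n : ℝ) - 1))) := by
  intro Zhat hZ
  have hcast : (n:ℝ) = (n₁:ℝ) + (n₂:ℝ) := by rw [hn]; push_cast; ring
  have hn2r : (2:ℝ) ≤ (n:ℝ) := by exact_mod_cast hn2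
  have hnpos : (0:ℝ) < (n:ℝ) := by linarith
  have hne : ((n:ℝ)) ≠ 0 := ne_of_gt hnpos
  have hn1r : (1:ℝ) ≤ (n:ℝ) - 1 := by linarith
  have hn1pos : (0:ℝ) < (n:ℝ) - 1 := by linarith
  have hpr : (1:ℝ) ≤ (p:ℝ) := by exact_mod_cast hp
  have hpγ : (0:ℝ) < (p:ℝ) * γ := by nlinarith
  have hn₁r : (0:ℝ) ≤ (n₁:ℝ) := by positivity
  have hn₂r : (0:ℝ) ≤ (n₂:ℝ) := by positivity
  have hn₁le : (n₁:ℝ) ≤ (n:ℝ) := by linarith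
  have hn₂le : (n₂:ℝ) ≤ (n:ℝ) := by linarith
  set d : Fin n → ℝ := dfun n n₁ V₁ V₂ with hdd
  set v : Fin n → ℝ := vref n n₁ n₂ with hvv
  set S : ℝ := (n₁:ℝ)*V₁ + (n₂:ℝ)*V₂ with hS
  have hdsum : ∑ k, d k = S := sum_fin_ite n n₁ n₂ hn V₁ V₂
  have hvsum : ∑ k, v k = 0 := by
    rw [hvv]
    simp only [vref]
    rw [sum_fin_ite n n₁ n₂ hn]
    field_simp
    ring
  have hv2 : ∑ k, (v k)^2 = (n₁:ℝ)*(n₂:ℝ)/(n:ℝ) := by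
    have h : ∀ k : Fin n, (v k)^2 = (if (k:ℕ) < n₁ then ((n₂:ℝ)/n)^2 else ((n₁:ℝ)/n)^2) := by
      intro k; by_cases hk : (k:ℕ) < n₁ <;> simp [hvv, vref, hk, neg_sq]
    rw [Finset.sum_congr rfl fun k _ => h k, sum_fin_ite n n₁ n₂ hn]
    rw [hcast]
    have h12 : (n₁:ℝ) + (n₂:ℝ) ≠ 0 := by rw [← hcast]; exact hne
    field_simp
    ring
  have hG : ∀ i j, Gbar n n₁ n₂ p γ V₁ V₂ i j =
      ((if i = j then d i else 0) - d i/(n:ℝ) - d j/(n:ℝ) + S/(n:ℝ)^2)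
        + ((p:ℝ)*γ)*(v i * v j) := by
    intro i j
    show (centering n * Dmat n n₁ V₁ V₂ * centering n + Rmat n n₁ n₂ p γ) i j = _
    rw [Matrix.add_apply, show Dmat n n₁ V₁ V₂ = Matrix.diagonal d from rfl,
      cdc_apply, hdsum]
    have hR : Rmat n n₁ n₂ p γ i j = ((p:ℝ)*γ)*(v i * v j) := by
      simp [Rmat, Matrix.vecMulVec_apply, hvv]
    rw [hR]
  have htr : Matrix.trace (Gbar n n₁ n₂ p γ V₁ V₂) =
      S*((n:ℝ)-1)/(n:ℝ) + (p:ℝ)*γ*((n₁:ℝ)*(n₂:ℝ)/(n:ℝ)) := by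
    have h : ∀ i : Fin n, (Gbar n n₁ n₂ p γ V₁ V₂).diag i =
        d i * (1 - 2/(n:ℝ)) + S/(n:ℝ)^2 + ((p:ℝ)*γ) * (v i)^2 := by
      intro i
      rw [Matrix.diag_apply, hG i i, if_pos rfl]
      ring
    rw [Matrix.trace, Finset.sum_congr rfl fun i _ => h i]
    rw [Finset.sum_add_distrib, Finset.sum_add_distrib, ← Finset.sum_mul,
      ← Finset.mul_sum, hdsum, hv2, Finset.sum_const, Finset.card_univ,
      Fintype.card_fin, nsmul_eq_mul]
    field_simp
    ring
  have hrow : ∀ i, ∑ j, Gbar n n₁ n₂ p γ V₁ V₂ i j = 0 := by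
    intro i
    rw [Finset.sum_congr rfl fun j _ => hG i j, Finset.sum_add_distrib]
    have h1 : ∑ j, ((if i = j then d i else 0) - d i/(n:ℝ) - d j/(n:ℝ) + S/(n:ℝ)^2) = 0 := by
      rw [Finset.sum_add_distrib, Finset.sum_sub_distrib, Finset.sum_sub_distrib]
      simp only [Finset.sum_ite_eq, Finset.mem_univ, if_true, Finset.sum_const,
        Finset.card_univ, Fintype.card_fin, nsmul_eq_mul, ← Finset.sum_div, hdsum]
      field_simp
      ring
    have h2 : ∑ j, ((p:ℝ)*γ)*(v i * v j) = 0 := by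
      have h' : ∀ j, ((p:ℝ)*γ)*(v i * v j) = (((p:ℝ)*γ)*v i) * v j := fun j => by ring
      rw [Finset.sum_congr rfl fun j _ => h' j, ← Finset.mul_sum, hvsum, mul_zero]
    rw [h1, h2, add_zero]
  have hsumG : ∑ i, ∑ j, Gbar n n₁ n₂ p γ V₁ V₂ i j = 0 := by
    rw [Finset.sum_congr rfl fun i _ => hrow i]; simp
  have hlam : lambar n n₁ n₂ p γ V₁ V₂ =
      -(S/(n:ℝ)^2) - (p:ℝ)*γ*((n₁:ℝ)*(n₂:ℝ))/((n:ℝ)^2*((n:ℝ)-1)) := by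
    rw [lambar, hsumG, htr]
    field_simp
    ring
  have hMoff : ∀ i j : Fin n, i ≠ j →
      (Bbar n n₁ n₂ p γ V₁ V₂ - Rmat n n₁ n₂ p γ) i j =
      -(d i)/(n:ℝ) - d j/(n:ℝ) + 2*S/(n:ℝ)^2
        + (p:ℝ)*γ*((n₁:ℝ)*(n₂:ℝ))/((n:ℝ)^2*((n:ℝ)-1)) := by
    intro i j hij
    rw [Matrix.sub_apply]
    show (Gbar n n₁ n₂ p γ V₁ V₂ - lambar n n₁ n₂ p γ V₁ V₂ • (En n - 1) -
      taubar n n₁ n₂ p γ V₁ V₂ • (1 : Matrix (Fin n) (Fin n) ℝ)) i j - _ = _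
    rw [Matrix.sub_apply, Matrix.sub_apply, Matrix.smul_apply, Matrix.smul_apply]
    have hE : (En n - 1) i j = 1 := by
      rw [Matrix.sub_apply, Matrix.one_apply_ne hij]; simp [En]
    have hI : (1 : Matrix (Fin n) (Fin n) ℝ) i j = 0 := Matrix.one_apply_ne hij
    have hR : Rmat n n₁ n₂ p γ i j = ((p:ℝ)*γ)*(v i * v j) := by
      simp [Rmat, Matrix.vecMulVec_apply, hvv]
    rw [hE, hI, hR, hG i j, if_neg hij, hlam]
    simp only [smul_eq_mul, mul_one, mul_zero]
    ring
  have hbound : ∀ i j : Fin n, i ≠ j →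
      |(Bbar n n₁ n₂ p γ V₁ V₂ - Rmat n n₁ n₂ p γ) i j| ≤
        2*((p:ℝ)*γ)*(ξ + 1/(4*((n:ℝ)-1))) := by
    intro i j hij
    rw [hMoff i j hij]
    set q : ℝ := (p:ℝ)*γ*((n₁:ℝ)*(n₂:ℝ))/((n:ℝ)^2*((n:ℝ)-1)) with hq
    have hqnn : 0 ≤ q := by rw [hq]; positivity
    have hq4 : (n₁:ℝ)*(n₂:ℝ)*4 ≤ (n:ℝ)^2 := by nlinarith [sq_nonneg ((n₁:ℝ)-(n₂:ℝ))]
    have hqle : q ≤ (p:ℝ)*γ/(4*((n:ℝ)-1)) := by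
      rw [hq, div_le_div_iff₀ (by positivity) (by positivity)]
      nlinarith [mul_nonneg (le_of_lt hpγ) (le_of_lt hn1pos)]
    obtain ⟨e, hee, heb⟩ : ∃ e : ℝ,
        (-(d i)/(n:ℝ) - d j/(n:ℝ) + 2*S/(n:ℝ)^2 = e*(V₁-V₂)/(n:ℝ)^2) ∧ |e| ≤ 2*(n:ℝ) := by
      have h12 : (n₁:ℝ) + (n₂:ℝ) ≠ 0 := by rw [← hcast]; exact hne
      by_cases hi : (i:ℕ) < n₁ <;> by_cases hj : (j:ℕ) < n₁
      · refine ⟨-(2*(n₂:ℝ)), ?_, ?_⟩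
        · simp only [hdd, dfun, if_pos hi, if_pos hj, hS]
          rw [hcast]; field_simp; ring
        · rw [abs_neg, abs_of_nonneg (by positivity)]; linarith
      · refine ⟨(n₁:ℝ)-(n₂:ℝ), ?_, ?_⟩
        · simp only [hdd, dfun, if_pos hi, if_neg hj, hS]
          rw [hcast]; field_simp; ring
        · rw [abs_le]; constructor <;> linarith
      · refine ⟨(n₁:ℝ)-(n₂:ℝ), ?_, ?_⟩
        · simp only [hdd, dfun, if_neg hi, if_pos hj, hS]
          rw [hcast]; field_simp; ring
        · rw [abs_le]; constructor <;> linarith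
      · refine ⟨2*(n₁:ℝ), ?_, ?_⟩
        · simp only [hdd, dfun, if_neg hi, if_neg hj, hS]
          rw [hcast]; field_simp; ring
        · rw [abs_of_nonneg (by positivity)]; linarith
    rw [hee]
    have h1 : |e*(V₁-V₂)/(n:ℝ)^2| ≤ 2*ξ*((p:ℝ)*γ)/3 := by
      rw [abs_div, abs_mul, abs_of_nonneg (by positivity : (0:ℝ) ≤ (n:ℝ)^2),
        div_le_iff₀ (by positivity)]
      have habs : |e| * |V₁-V₂| ≤ (2*(n:ℝ)) * (ξ * n * p * γ / 3) :=
        mul_le_mul heb hA2 (abs_nonneg _) (by positivity)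
      nlinarith
    calc |e*(V₁-V₂)/(n:ℝ)^2 + q| ≤ |e*(V₁-V₂)/(n:ℝ)^2| + |q| := abs_add_le _ _
      _ = |e*(V₁-V₂)/(n:ℝ)^2| + q := by rw [abs_of_nonneg hqnn]
      _ ≤ 2*ξ*((p:ℝ)*γ)/3 + (p:ℝ)*γ/(4*((n:ℝ)-1)) := add_le_add h1 hqle
      _ ≤ 2*((p:ℝ)*γ)*(ξ + 1/(4*((n:ℝ)-1))) := by
          have hF : (0:ℝ) ≤ (p:ℝ)*γ/(4*((n:ℝ)-1)) := by positivity
          have hx : (0:ℝ) ≤ ξ*((p:ℝ)*γ) := by positivity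
          have : 2*((p:ℝ)*γ)*(ξ + 1/(4*((n:ℝ)-1)))
              = 2*(ξ*((p:ℝ)*γ)) + 2*((p:ℝ)*γ/(4*((n:ℝ)-1))) := by field_simp
          rw [this]; linarith
  have hdiag : ∀ i, (Zhat - Zstar n n₁) i i = 0 := by
    intro i
    rw [Matrix.sub_apply, hZ.2 i]
    have : Zstar n n₁ i i = 1 := by
      by_cases hi : (i:ℕ) < n₁ <;> simp [Zstar, Matrix.vecMulVec_apply, u2, hi]
    rw [this]; ring
  calc |ip (Bbar n n₁ n₂ p γ V₁ V₂ - Rmat n n₁ n₂ p γ) (Zhat - Zstar n n₁)|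
      = |∑ i, ∑ j, (Bbar n n₁ n₂ p γ V₁ V₂ - Rmat n n₁ n₂ p γ) i j *
          (Zhat - Zstar n n₁) i j| := by rw [ip_eq_sum']
    _ ≤ ∑ i, ∑ j, |(Bbar n n₁ n₂ p γ V₁ V₂ - Rmat n n₁ n₂ p γ) i j *
          (Zhat - Zstar n n₁) i j| :=
        (Finset.abs_sum_le_sum_abs _ _).trans
          (Finset.sum_le_sum fun i _ => Finset.abs_sum_le_sum_abs _ _)
    _ ≤ ∑ i, ∑ j, (2*((p:ℝ)*γ)*(ξ + 1/(4*((n:ℝ)-1)))) * |(Zhat - Zstar n n₁) i j| := by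
        refine Finset.sum_le_sum fun i _ => Finset.sum_le_sum fun j _ => ?_
        rcases eq_or_ne i j with h | h
        · subst h; simp [hdiag i]
        · rw [abs_mul]
          exact mul_le_mul_of_nonneg_right (hbound i j h) (abs_nonneg _)
    _ = (2*((p:ℝ)*γ)*(ξ + 1/(4*((n:ℝ)-1)))) * ell1Norm (Zhat - Zstar n n₁) := by
        rw [ell1Norm, Finset.mul_sum]
        exact Finset.sum_congr rfl fun i _ => (Finset.mul_sum _ _ _).symm
    _ = 2 * ((p : ℝ) * γ) * ell1Norm (Zhat - Zstar n n₁) * (ξ + 1 / (4 * ((n : ℝ) - 1))) := by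
        ring

end
end

section
/- For every Ẑ ∈ M_opt, setting P₂ := Z*/n: tr(P₂(Z* − Ẑ)) = (1/n)·tr(Z*(Z* − Ẑ)) = (1/n)·‖Z* − Ẑ‖₁ ≤ 2(n−1). -/
/-! Every entry of `Z*` is `±1` while every entry of `Ẑ` lies in `[-1, 1]` (a `2 × 2` principal
minor of a PSD matrix with unit diagonal), so each entry of `Z* - Ẑ` carries the sign of the
corresponding entry of `Z*`. Hence the Frobenius pairing `tr(Z* (Z* - Ẑ))` is `‖Z* - Ẑ‖₁`.
The diagonal of `Z* - Ẑ` vanishes and its off-diagonal entries are at most `2` in absolute value,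
which gives the bound `n (n - 1) · 2`. -/

open Matrix Finset

noncomputable section

theorem Matrix.PosSemidef.two_mul_abs_apply_le {ι : Type*} [Fintype ι] [DecidableEq ι]
    {Z : Matrix ι ι ℝ} (hZ : Z.PosSemidef) (i j : ι) : 2 * |Z i j| ≤ Z i i + Z j j := by
  have hsymm : Z j i = Z i j := hZ.isHermitian.apply i j
  have hquad (c : ℝ) : 0 ≤ Z i i + 2 * c * Z i j + c ^ 2 * Z j j := by
    have h := hZ.dotProduct_mulVec_nonneg (Pi.single i 1 + c • Pi.single j 1)
    simp only [star_trivial, mulVec_add, mulVec_smul, mulVec_single, dotProduct_add,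
      add_dotProduct, smul_dotProduct, dotProduct_smul, single_dotProduct, col_apply,
      smul_eq_mul, op_smul_eq_mul, one_mul, mul_one, hsymm] at h
    linarith
  have := hquad 1
  have := hquad (-1)
  cases abs_cases (Z i j) <;> linarith

theorem Matrix.PosSemidef.abs_apply_le_one {ι : Type*} [Fintype ι] [DecidableEq ι]
    {Z : Matrix ι ι ℝ} (hZ : Z.PosSemidef) (hdiag : ∀ i, Z i i = 1) (i j : ι) :
    |Z i j| ≤ 1 := by
  linarith [hZ.two_mul_abs_apply_le i j, hdiag i, hdiag j]

theorem mul_sub_eq_abs_sub {s a : ℝ} (hs : |s| = 1) (ha : |a| ≤ 1) : s * (s - a) = |s - a| := by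
  rcases abs_eq zero_le_one |>.mp hs with rfl | rfl <;>
    rw [abs_le] at ha <;> [rw [abs_of_nonneg]; rw [abs_of_nonpos]] <;> linarith

theorem trace_mul_sub_eq_ell1Norm {n : ℕ} {S A : Matrix (Fin n) (Fin n) ℝ} (hS : Sᵀ = S)
    (hSabs : ∀ i j, |S i j| = 1) (hA : ∀ i j, |A i j| ≤ 1) :
    trace (S * (S - A)) = ell1Norm (S - A) := by
  have hsymm (i j : Fin n) : S i j = S j i := congrFun₂ hS j i
  simp only [trace, Matrix.diag, mul_apply]
  rw [ell1Norm, sum_comm]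
  refine sum_congr rfl fun i _ => sum_congr rfl fun j _ => ?_
  rw [Matrix.sub_apply, ← hsymm i j, mul_sub_eq_abs_sub (hSabs i j) (hA i j)]

theorem ell1Norm_le_of_diag_eq_zero {n : ℕ} {M : Matrix (Fin n) (Fin n) ℝ} {c : ℝ}
    (hdiag : ∀ i, M i i = 0) (hM : ∀ i j, |M i j| ≤ c) :
    ell1Norm M ≤ n * (c * (n - 1)) := by
  have hentry (i j : Fin n) : |M i j| ≤ c - if i = j then c else 0 := by
    split_ifs with h
    · subst h; simp [hdiag]
    · simpa using hM i j
  calc ell1Norm M ≤ ∑ i : Fin n, ∑ j : Fin n, (c - if i = j then c else 0) :=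
        sum_le_sum fun i _ => sum_le_sum fun j _ => hentry i j
    _ = n * (c * (n - 1)) := by
      simp only [sum_sub_distrib, sum_const, card_univ, Fintype.card_fin, nsmul_eq_mul,
        sum_ite_eq, mem_univ, ↓reduceIte]
      ring

theorem abs_u2 (n n₁ : ℕ) (j : Fin n) : |u2 n n₁ j| = 1 := by
  unfold u2; split_ifs <;> simp

theorem transpose_Zstar (n n₁ : ℕ) : (Zstar n n₁)ᵀ = Zstar n n₁ :=
  transpose_vecMulVec _ _

theorem abs_Zstar_apply (n n₁ : ℕ) (i j : Fin n) : |Zstar n n₁ i j| = 1 := by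
  simp [Zstar, vecMulVec_apply, abs_mul, abs_u2]

theorem Zstar_apply_self (n n₁ : ℕ) (i : Fin n) : Zstar n n₁ i i = 1 := by
  rw [Zstar, vecMulVec_apply, ← abs_mul_self, abs_mul, abs_u2, mul_one]

theorem trace_P2_identity_general (n n₁ n₂ : ℕ) (hn : n = n₁ + n₂)
    (hn₁ : 0 < n₁)
    (Zhat : Matrix (Fin n) (Fin n) ℝ) (hZhat : Zhat ∈ Mopt n) :
    Matrix.trace (((n : ℝ)⁻¹ • Zstar n n₁) * (Zstar n n₁ - Zhat)) =
      (n : ℝ)⁻¹ * Matrix.trace (Zstar n n₁ * (Zstar n n₁ - Zhat)) ∧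
    (n : ℝ)⁻¹ * Matrix.trace (Zstar n n₁ * (Zstar n n₁ - Zhat)) =
      (n : ℝ)⁻¹ * ell1Norm (Zstar n n₁ - Zhat) ∧
    (n : ℝ)⁻¹ * ell1Norm (Zstar n n₁ - Zhat) ≤ 2 * ((n : ℝ) - 1) := by
  obtain ⟨hpsd, hdiag⟩ := hZhat
  have hn0 : (n : ℝ) ≠ 0 := Nat.cast_ne_zero.mpr (by omega)
  have hentry := hpsd.abs_apply_le_one hdiag
  have hdiff_diag (i : Fin n) : (Zstar n n₁ - Zhat) i i = 0 := by
    rw [Matrix.sub_apply, Zstar_apply_self, hdiag, sub_self]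
  have hdiff_le (i j : Fin n) : |(Zstar n n₁ - Zhat) i j| ≤ 2 :=
    (abs_sub _ _).trans (by linarith [abs_Zstar_apply n n₁ i j, hentry i j])
  refine ⟨by rw [smul_mul, trace_smul, smul_eq_mul], ?_, ?_⟩
  · rw [trace_mul_sub_eq_ell1Norm (transpose_Zstar n n₁) (abs_Zstar_apply n n₁) hentry]
  · calc (n : ℝ)⁻¹ * ell1Norm (Zstar n n₁ - Zhat)
        ≤ (n : ℝ)⁻¹ * (n * (2 * (n - 1))) := by
          gcongr
          exact ell1Norm_le_of_diag_eq_zero hdiff_diag hdiff_le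
      _ = 2 * (n - 1) := inv_mul_cancel_left₀ hn0 _

/-- for `Ẑ ∈ M_opt` and `P₂ = Z*/n`,
`tr(P₂(Z* - Ẑ)) = tr(Z*(Z* - Ẑ))/n = ‖Z* - Ẑ‖₁/n ≤ 2(n-1)`. -/
theorem trace_P2_identity (n n₁ n₂ : ℕ) (hn : n = n₁ + n₂)
    (hn₁ : 0 < n₁) (hn₂ : 0 < n₂)
    (Zhat : Matrix (Fin n) (Fin n) ℝ) (hZhat : Zhat ∈ Mopt n) :
    Matrix.trace (((n : ℝ)⁻¹ • Zstar n n₁) * (Zstar n n₁ - Zhat)) =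
      (n : ℝ)⁻¹ * Matrix.trace (Zstar n n₁ * (Zstar n n₁ - Zhat)) ∧
    (n : ℝ)⁻¹ * Matrix.trace (Zstar n n₁ * (Zstar n n₁ - Zhat)) =
      (n : ℝ)⁻¹ * ell1Norm (Zstar n n₁ - Zhat) ∧
    (n : ℝ)⁻¹ * ell1Norm (Zstar n n₁ - Zhat) ≤ 2 * ((n : ℝ) - 1) :=
  trace_P2_identity_general n n₁ n₂ hn hn₁ Zhat hZhat

end
end

section
/- Let Ẑ ∈ M_opt and P₂ := Z*/n. Then (I_n−P₂)·Z*·(I_n−P₂) = 0; the matrix (I_n−P₂)·Ẑ·(I_n−P₂) is positive semidefinite with trace equal to ‖Z* − Ẑ‖₁/n; and for every real symmetric n×n matrix Λ, |⟨Λ, (I_n−P₂)(Ẑ−Z*)(I_n−P₂)⟩| = |⟨Λ, (I_n−P₂)·Ẑ·(I_n−P₂)⟩| ≤ ‖Λ‖₂·‖Z* − Ẑ‖₁/n. -/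
open Matrix Finset

noncomputable section

/-! `Z* = u uᵀ` with `u ∈ {±1}ⁿ`, so `P₂ = u uᵀ / (u ⬝ u)` is the orthogonal projection onto
`span u` and `I - P₂` annihilates `Z*`. Compressing the correlation matrix `Ẑ` by `I - P₂` keeps
it positive semidefinite, with trace `tr Ẑ - uᵀ Ẑ u / n = n - uᵀ Ẑ u / n`. Since `|Ẑᵢⱼ| ≤ 1`,
every entry `|uᵢ uⱼ - Ẑᵢⱼ|` equals `1 - uᵢ uⱼ Ẑᵢⱼ`, so `n² - uᵀ Ẑ u = ‖Z* - Ẑ‖₁`. Finally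
`|⟨Λ, M⟩| ≤ ‖Λ‖₂ tr M` for `M ⪰ 0`: write `M = Sᵀ S`, so that `⟨Λ, M⟩ = ∑ᵢ sᵢᵀ Λ sᵢ` and
`tr M = ∑ᵢ sᵢᵀ sᵢ` over the rows `sᵢ` of `S`. -/

lemma abs_dotProduct_mulVec_le_opNorm {n : ℕ} (Λ : Matrix (Fin n) (Fin n) ℝ) (x : Fin n → ℝ) :
    |x ⬝ᵥ Λ *ᵥ x| ≤ opNorm Λ * (x ⬝ᵥ x) := by
  set y : EuclideanSpace ℝ (Fin n) := WithLp.toLp 2 x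
  have hL : opNorm Λ = ‖toEuclideanCLM (𝕜 := ℝ) Λ‖ := rfl
  have hy : x ⬝ᵥ x = ‖y‖ ^ 2 := by
    rw [← real_inner_self_eq_norm_sq, EuclideanSpace.inner_toLp_toLp, star_trivial]
  rw [← inner_toEuclideanCLM Λ y y, hL, hy]
  calc _ ≤ ‖y‖ * ‖toEuclideanCLM (𝕜 := ℝ) Λ y‖ := abs_real_inner_le_norm _ _
    _ ≤ ‖y‖ * (‖toEuclideanCLM (𝕜 := ℝ) Λ‖ * ‖y‖) := by
      gcongr; exact ContinuousLinearMap.le_opNorm _ _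
    _ = _ := by ring

open scoped ComplexOrder in
lemma Matrix.PosSemidef.exists_eq_conjTranspose_mul_self {n 𝕜 : Type*} [Fintype n]
    [DecidableEq n] [RCLike 𝕜] {M : Matrix n n 𝕜} (hM : M.PosSemidef) :
    ∃ S : Matrix n n 𝕜, M = Sᴴ * S := by
  open scoped MatrixOrder in
  refine ⟨CFC.sqrt M, ?_⟩
  rw [(CFC.sqrt_nonneg M).posSemidef.1.eq, CFC.sqrt_mul_sqrt_self M hM.nonneg]

lemma abs_ip_le_opNorm_mul_trace {n : ℕ} {Λ M : Matrix (Fin n) (Fin n) ℝ} (hΛ : Λᵀ = Λ)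
    (hM : M.PosSemidef) : |ip Λ M| ≤ opNorm Λ * M.trace := by
  obtain ⟨S, rfl⟩ := hM.exists_eq_conjTranspose_mul_self
  rw [conjTranspose_eq_transpose_of_trivial]
  have hip : ip Λ (Sᵀ * S) = ∑ i, S i ⬝ᵥ Λ *ᵥ S i := by
    rw [ip, hΛ, ← Matrix.mul_assoc, trace_mul_cycle]
    simp [Matrix.trace, mul_mul_apply]
  have htr : (Sᵀ * S).trace = ∑ i, S i ⬝ᵥ S i := by
    rw [trace_mul_comm]
    simp [Matrix.trace, mul_apply']
  rw [hip, htr, Finset.mul_sum]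
  exact (Finset.abs_sum_le_sum_abs _ _).trans
    (Finset.sum_le_sum fun i _ => abs_dotProduct_mulVec_le_opNorm Λ (S i))

lemma Matrix.PosSemidef.apply_mul_apply_le {n : Type*} [Fintype n] [DecidableEq n]
    {Z : Matrix n n ℝ} (hZ : Z.PosSemidef) (i j : n) : Z i j * Z j i ≤ Z i i * Z j j := by
  have h := LinearMap.BilinForm.apply_mul_apply_le_of_forall_zero_le (toBilin' Z)
    (fun x => by simpa [toBilin'_apply'] using hZ.dotProduct_mulVec_nonneg x)
    (Pi.single i 1) (Pi.single j 1)
  simpa using h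

lemma abs_apply_le_one_of_mem_Mopt {n : ℕ} {Z : Matrix (Fin n) (Fin n) ℝ} (hZ : Z ∈ Mopt n)
    (i j : Fin n) : |Z i j| ≤ 1 := by
  have h := hZ.1.apply_mul_apply_le i j
  rw [hZ.2 i, hZ.2 j, ← hZ.1.1.apply j i, star_trivial, one_mul, ← sq] at h
  exact sq_le_one_iff_abs_le_one _ |>.mp h

lemma trace_eq_of_mem_Mopt {n : ℕ} {Z : Matrix (Fin n) (Fin n) ℝ} (hZ : Z ∈ Mopt n) :
    Z.trace = n := by
  simp [Matrix.trace, hZ.2]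

lemma abs_sub_eq_one_sub_mul {s z : ℝ} (hs : s * s = 1) (hz : |z| ≤ 1) :
    |s - z| = 1 - s * z := by
  obtain ⟨hz₁, hz₂⟩ := abs_le.mp hz
  rcases mul_self_eq_one_iff.mp hs with rfl | rfl
  · rw [abs_of_nonneg (by linarith)]; ring
  · rw [abs_of_nonpos (by linarith)]; ring

lemma dotProduct_self_eq_card_of_mul_self_eq_one {ι : Type*} [Fintype ι] {u : ι → ℝ}
    (hu : ∀ i, u i * u i = 1) : u ⬝ᵥ u = Fintype.card ι := by
  simp [dotProduct, hu]

lemma ell1Norm_vecMulVec_sub {n : ℕ} {u : Fin n → ℝ} (hu : ∀ i, u i * u i = 1)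
    {Z : Matrix (Fin n) (Fin n) ℝ} (hZ : ∀ i j, |Z i j| ≤ 1) :
    ell1Norm (vecMulVec u u - Z) = n * n - u ⬝ᵥ Z *ᵥ u := by
  have hentry (i j : Fin n) : |(vecMulVec u u - Z) i j| = 1 - u i * Z i j * u j := by
    rw [Matrix.sub_apply, vecMulVec_apply, abs_sub_eq_one_sub_mul _ (hZ i j)]
    · ring
    · calc u i * u j * (u i * u j) = (u i * u i) * (u j * u j) := by ring
        _ = 1 := by rw [hu, hu, one_mul]
  simp only [ell1Norm, hentry]
  simp [Finset.sum_sub_distrib, dotProduct, mulVec, Finset.mul_sum, mul_assoc]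

section RankOneProj

variable {ι : Type*} [Fintype ι]

def rankOneProj (u : ι → ℝ) : Matrix ι ι ℝ := (u ⬝ᵥ u)⁻¹ • vecMulVec u u

lemma rankOneProj_mul_vecMulVec (u : ι → ℝ) : rankOneProj u * vecMulVec u u = vecMulVec u u := by
  rcases eq_or_ne (u ⬝ᵥ u) 0 with hu | hu
  · simp [dotProduct_self_eq_zero.mp hu]
  · rw [rankOneProj, smul_mul, vecMulVec_mul_vecMulVec, vecMulVec_smul, smul_smul,
      inv_mul_cancel₀ hu, one_smul]

lemma isIdempotentElem_rankOneProj (u : ι → ℝ) : IsIdempotentElem (rankOneProj u) := by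
  rw [IsIdempotentElem]
  conv_lhs => enter [2]; rw [rankOneProj]
  rw [Matrix.mul_smul, rankOneProj_mul_vecMulVec, rankOneProj]

lemma transpose_rankOneProj (u : ι → ℝ) : (rankOneProj u)ᵀ = rankOneProj u := by
  rw [rankOneProj, transpose_smul, transpose_vecMulVec]

variable [DecidableEq ι]

lemma one_sub_rankOneProj_mul_vecMulVec (u : ι → ℝ) :
    (1 - rankOneProj u) * vecMulVec u u = 0 := by
  rw [sub_mul, one_mul, rankOneProj_mul_vecMulVec, sub_self]

lemma Matrix.PosSemidef.one_sub_rankOneProj_mul_mul {Z : Matrix ι ι ℝ} (hZ : Z.PosSemidef)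
    (u : ι → ℝ) : ((1 - rankOneProj u) * Z * (1 - rankOneProj u)).PosSemidef := by
  have h := hZ.conjTranspose_mul_mul_same (1 - rankOneProj u)
  rwa [conjTranspose_eq_transpose_of_trivial, transpose_sub, transpose_one,
    transpose_rankOneProj] at h

lemma trace_one_sub_rankOneProj_mul_mul (Z : Matrix ι ι ℝ) (u : ι → ℝ) :
    ((1 - rankOneProj u) * Z * (1 - rankOneProj u)).trace =
      Z.trace - (u ⬝ᵥ Z *ᵥ u) / (u ⬝ᵥ u) := by
  rw [trace_mul_cycle, (isIdempotentElem_rankOneProj u).one_sub.eq, sub_mul, one_mul, trace_sub,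
    rankOneProj, smul_mul, trace_smul, vecMulVec_mul, trace_vecMulVec,
    dotProduct_comm u (u ᵥ* Z), ← dotProduct_mulVec, smul_eq_mul, inv_mul_eq_div]

end RankOneProj

lemma u2_mul_self (n n₁ : ℕ) (i : Fin n) : u2 n n₁ i * u2 n n₁ i = 1 := by
  unfold u2; split_ifs <;> norm_num

theorem projection_perp_bound_general (n n₁ : ℕ)
    (Zhat : Matrix (Fin n) (Fin n) ℝ) (hZhat : Zhat ∈ Mopt n) :
    let P2 : Matrix (Fin n) (Fin n) ℝ := (n : ℝ)⁻¹ • Zstar n n₁;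
    ((1 - P2) * Zstar n n₁ * (1 - P2) = 0) ∧
    ((1 - P2) * Zhat * (1 - P2)).PosSemidef ∧
    Matrix.trace ((1 - P2) * Zhat * (1 - P2)) = ell1Norm (Zstar n n₁ - Zhat) / n ∧
    (∀ Λ : Matrix (Fin n) (Fin n) ℝ, Λᵀ = Λ →
      |ip Λ ((1 - P2) * (Zhat - Zstar n n₁) * (1 - P2))| =
        |ip Λ ((1 - P2) * Zhat * (1 - P2))| ∧
      |ip Λ ((1 - P2) * Zhat * (1 - P2))| ≤
        opNorm Λ * ell1Norm (Zstar n n₁ - Zhat) / n) := by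
  intro P2
  have hu := u2_mul_self n n₁
  have hP2 : P2 = rankOneProj (u2 n n₁) := by
    rw [rankOneProj, dotProduct_self_eq_card_of_mul_self_eq_one hu, Fintype.card_fin]; rfl
  have hkill : (1 - P2) * Zstar n n₁ = 0 := hP2 ▸ one_sub_rankOneProj_mul_vecMulVec _
  have hpsd : ((1 - P2) * Zhat * (1 - P2)).PosSemidef :=
    hP2 ▸ hZhat.1.one_sub_rankOneProj_mul_mul _
  have htrace : ((1 - P2) * Zhat * (1 - P2)).trace = ell1Norm (Zstar n n₁ - Zhat) / n := by
    rw [hP2, trace_one_sub_rankOneProj_mul_mul, dotProduct_self_eq_card_of_mul_self_eq_one hu,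
      Fintype.card_fin, trace_eq_of_mem_Mopt hZhat, Zstar,
      ell1Norm_vecMulVec_sub hu (abs_apply_le_one_of_mem_Mopt hZhat), sub_div, mul_self_div_self]
  refine ⟨by rw [hkill, zero_mul], hpsd, htrace, fun Λ hΛ => ⟨?_, ?_⟩⟩
  · rw [Matrix.mul_sub (1 - P2) Zhat, hkill, sub_zero]
  · rw [mul_div_assoc, ← htrace]
    exact abs_ip_le_opNorm_mul_trace hΛ hpsd

/-- projection identities and the nuclear-norm style bound
`|⟨Λ, (I-P₂)(Ẑ-Z*)(I-P₂)⟩| ≤ ‖Λ‖₂·‖Z* - Ẑ‖₁/n` for `Ẑ ∈ M_opt`, `P₂ = Z*/n`. -/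
theorem projection_perp_bound (n n₁ n₂ : ℕ) (hn : n = n₁ + n₂)
    (hn₁ : 0 < n₁) (hn₂ : 0 < n₂)
    (Zhat : Matrix (Fin n) (Fin n) ℝ) (hZhat : Zhat ∈ Mopt n) :
    let P2 : Matrix (Fin n) (Fin n) ℝ := (n : ℝ)⁻¹ • Zstar n n₁;
    ((1 - P2) * Zstar n n₁ * (1 - P2) = 0) ∧
    ((1 - P2) * Zhat * (1 - P2)).PosSemidef ∧
    Matrix.trace ((1 - P2) * Zhat * (1 - P2)) = ell1Norm (Zstar n n₁ - Zhat) / n ∧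
    (∀ Λ : Matrix (Fin n) (Fin n) ℝ, Λᵀ = Λ →
      |ip Λ ((1 - P2) * (Zhat - Zstar n n₁) * (1 - P2))| =
        |ip Λ ((1 - P2) * Zhat * (1 - P2))| ∧
      |ip Λ ((1 - P2) * Zhat * (1 - P2))| ≤
        opNorm Λ * ell1Norm (Zstar n n₁ - Zhat) / n) :=
  projection_perp_bound_general n n₁ Zhat hZhat

end
end
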